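/- arXiv:1701.04956 — 4 statements merged into one kernel-verified Lean document; each statement's English description precedes it below -/
import Mathlib

section
/- For n ≥ 2, the statistics 2χ_1 + χ_2 and χ_{n−1} + 2χ_n are both 1-mesic under the action of φ on I_n; explicitly, for every independent set S ∈ I_n and every integer m ≥ 1 with φ^m(S) = S, one has ∑_{i=0}^{m−1} ( 2χ_1(φ^i(S)) + χ_2(φ^i(S)) ) = m and ∑_{i=0}^{m−1} ( χ_{n−1}(φ^i(S)) + 2χ_n(φ^i(S)) ) = m. -/
/-- An independent set of the path graph `P_n` (vertices `1,…,n`, edges `{i,i+1}`):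
a subset of `{1,…,n}` containing no two adjacent vertices. -/
def IndepSet (n : ℕ) (S : Finset ℕ) : Prop :=
  S ⊆ Finset.Icc 1 n ∧ ∀ i ∈ S, i + 1 ∉ S

instance (n : ℕ) (S : Finset ℕ) : Decidable (IndepSet n S) := by
  unfold IndepSet; infer_instance

/-- The toggle `τ_i` acting on independent sets of the path graph `P_n`. -/
def toggle (n i : ℕ) (S : Finset ℕ) : Finset ℕ :=
  if i ∈ S then S.erase i
  else if IndepSet n (insert i S) then insert i S
  else S

/-- `φ = τ_n ∘ ⋯ ∘ τ_2 ∘ τ_1` (toggle at each vertex from left to right). -/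
def phi (n : ℕ) (S : Finset ℕ) : Finset ℕ :=
  (List.range n).foldl (fun T k => toggle n (k + 1) T) S

/-- `φ⁻¹ = τ_1 ∘ τ_2 ∘ ⋯ ∘ τ_n` (toggle at each vertex from right to left). -/
def phiInv (n : ℕ) (S : Finset ℕ) : Finset ℕ :=
  (List.range n).foldr (fun k T => toggle n (k + 1) T) S

/-!
Toggling vertex `1` first, `φ` puts `1` into `φ(T)` exactly when neither `1` nor `2` lies in `T`,
so `2χ₁ + χ₂ = 1 + χ₁ - χ₁ ∘ φ` on independent sets. Toggling vertex `n` last, `φ(T)` meets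
`{n-1, n}` in exactly one vertex if `n ∉ T` and in none if `n ∈ T`, so
`χₙ₋₁ + 2χₙ = 1 + g - g ∘ φ` with `g = χₙ₋₁ + χₙ`. Both statistics thus differ from `1` by a
coboundary, which sums to zero along any periodic orbit.
-/

theorem Function.IsPeriodicPt.sum_range_iterate_eq_nsmul {α M : Type*} [AddCommGroup M]
    {f : α → α} {s : Set α} (hf : Set.MapsTo f s s) {g h : α → M} {c : M}
    (hgh : ∀ a ∈ s, h a = c + (g a - g (f a))) {x : α} (hx : x ∈ s) {m : ℕ}
    (hm : Function.IsPeriodicPt f m x) :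
    ∑ i ∈ Finset.range m, h (f^[i] x) = m • c := by
  rw [Finset.sum_congr rfl fun i _ => hgh _ (hf.iterate i hx), Finset.sum_add_distrib,
    Finset.sum_const, Finset.card_range]
  simp only [← Function.iterate_succ_apply' f]
  rw [Finset.sum_range_sub' (fun i => g (f^[i] x)), hm.eq, Function.iterate_zero_apply, sub_self,
    add_zero]

def chi (j : ℕ) (T : Finset ℕ) : ℤ := if j ∈ T then 1 else 0

lemma mem_toggle_of_ne {n i j : ℕ} {T : Finset ℕ} (h : j ≠ i) : j ∈ toggle n i T ↔ j ∈ T := by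
  unfold toggle
  split_ifs <;> simp [h]

lemma mem_foldl_toggle_of_ne {n j : ℕ} (l : List ℕ) (T : Finset ℕ) (h : ∀ k ∈ l, k + 1 ≠ j) :
    j ∈ l.foldl (fun T k => toggle n (k + 1) T) T ↔ j ∈ T := by
  induction l generalizing T with
  | nil => rfl
  | cons a l ih =>
    rw [List.foldl_cons, ih _ fun k hk => h k (List.mem_cons_of_mem _ hk),
      mem_toggle_of_ne (h a List.mem_cons_self).symm]

namespace IndepSet

variable {n : ℕ} {T : Finset ℕ}

lemma mono {S : Finset ℕ} (hST : T ⊆ S) (hS : IndepSet n S) : IndepSet n T :=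
  ⟨hST.trans hS.1, fun i hi hi' => hS.2 i (hST hi) (hST hi')⟩

lemma mem_Icc (hT : IndepSet n T) {j : ℕ} (hj : j ∈ T) : 1 ≤ j ∧ j ≤ n :=
  Finset.mem_Icc.mp (hT.1 hj)

lemma pred_notMem (hT : IndepSet n T) {j : ℕ} (hj : j ∈ T) : j - 1 ∉ T := fun hj' => by
  have := hT.2 _ hj'
  rw [Nat.sub_add_cancel (hT.mem_Icc hj).1] at this
  exact this hj

lemma insert_iff (hT : IndepSet n T) {i : ℕ} (hi : 1 ≤ i ∧ i ≤ n) :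
    IndepSet n (insert i T) ↔ i - 1 ∉ T ∧ i + 1 ∉ T := by
  refine ⟨fun h => ⟨fun hT' => ?_, h.2 i (T.mem_insert_self i) ∘ T.mem_insert_of_mem⟩,
    fun ⟨hpred, hsucc⟩ => ⟨?_, ?_⟩⟩
  · have := h.2 _ (T.mem_insert_of_mem hT')
    rw [Nat.sub_add_cancel hi.1] at this
    exact this (T.mem_insert_self i)
  · exact Finset.insert_subset (Finset.mem_Icc.mpr hi) hT.1
  · intro j hj hj'
    rcases Finset.mem_insert.mp hj with rfl | hj <;> rcases Finset.mem_insert.mp hj' with h | h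
    · omega
    · exact hsucc h
    · exact hpred (by rwa [show j = i - 1 by omega] at hj)
    · exact hT.2 j hj h

lemma toggle (hT : IndepSet n T) (i : ℕ) : IndepSet n (_root_.toggle n i T) := by
  unfold _root_.toggle
  split_ifs with _ hins
  exacts [hT.mono (T.erase_subset i), hins, hT]

lemma foldl_toggle (hT : IndepSet n T) (l : List ℕ) :
    IndepSet n (l.foldl (fun T k => _root_.toggle n (k + 1) T) T) := by
  induction l generalizing T with
  | nil => exact hT
  | cons a l ih => exact ih (hT.toggle _)

lemma phi (hT : IndepSet n T) : IndepSet n (_root_.phi n T) := hT.foldl_toggle _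

end IndepSet

section Toggle

variable {n : ℕ} {T : Finset ℕ}

lemma mem_toggle_self (hT : IndepSet n T) {i : ℕ} (hi : 1 ≤ i ∧ i ≤ n) :
    i ∈ toggle n i T ↔ i ∉ T ∧ i - 1 ∉ T ∧ i + 1 ∉ T := by
  unfold toggle
  by_cases hiT : i ∈ T
  · simp [hiT]
  · simp only [hiT, if_false, hT.insert_iff hi]
    split_ifs with h <;> simp [h, hiT]

lemma mem_phi_one (hn : 1 ≤ n) (hT : IndepSet n T) : 1 ∈ phi n T ↔ 1 ∉ T ∧ 2 ∉ T := by
  obtain ⟨k, rfl⟩ : ∃ k, n = k + 1 := ⟨n - 1, by omega⟩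
  have hzero : 0 ∉ T := fun h => by simpa using hT.mem_Icc h
  rw [phi, List.range_succ_eq_map, List.foldl_cons, mem_foldl_toggle_of_ne _ _ (by simp),
    mem_toggle_self hT ⟨le_rfl, by omega⟩]
  simp [hzero]

lemma phi_eq_toggle_foldl (hn : 1 ≤ n) (T : Finset ℕ) :
    phi n T = toggle n n ((List.range (n - 1)).foldl (fun T k => toggle n (k + 1) T) T) := by
  obtain ⟨k, rfl⟩ : ∃ k, n = k + 1 := ⟨n - 1, by omega⟩
  rw [phi, List.range_succ, List.foldl_append]
  rfl

lemma chi_one_phi (hn : 1 ≤ n) (hT : IndepSet n T) :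
    chi 1 (phi n T) = 1 - chi 1 T - chi 2 T := by
  have h12 : 1 ∈ T → 2 ∉ T := hT.2 1
  unfold chi
  rw [if_congr (mem_phi_one hn hT) rfl rfl]
  split_ifs <;> simp_all

lemma chi_pred_add_chi_phi (hn : 1 ≤ n) (hT : IndepSet n T) :
    chi (n - 1) (phi n T) + chi n (phi n T) = 1 - chi n T := by
  set U := (List.range (n - 1)).foldl (fun T k => toggle n (k + 1) T) T
  have hU : IndepSet n U := hT.foldl_toggle _
  have hnU : n ∈ U ↔ n ∈ T := mem_foldl_toggle_of_ne _ _ fun k hk => by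
    rw [List.mem_range] at hk; omega
  have hsucc : n + 1 ∉ U := fun h => by have := hU.mem_Icc h; omega
  have hpred : n - 1 ∈ phi n T ↔ n - 1 ∈ U := by
    rw [phi_eq_toggle_foldl hn]; exact mem_toggle_of_ne (by omega)
  have hlast : n ∈ phi n T ↔ n ∉ U ∧ n - 1 ∉ U := by
    rw [phi_eq_toggle_foldl hn, mem_toggle_self hU ⟨hn, le_rfl⟩]; simp [hsucc]
  by_cases hnT : n ∈ T
  · have := hU.pred_notMem (hnU.mpr hnT)
    simp_all [chi]
  · by_cases h : n - 1 ∈ U <;> simp_all [chi]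

end Toggle

theorem stmt1_general (n : ℕ) (hn : 2 ≤ n) (S : Finset ℕ) (hS : IndepSet n S)
    (m : ℕ) (hfix : (phi n)^[m] S = S) :
    (∑ i ∈ Finset.range m,
        (2 * (if 1 ∈ (phi n)^[i] S then (1 : ℤ) else 0)
          + (if 2 ∈ (phi n)^[i] S then (1 : ℤ) else 0)) = m)
    ∧ (∑ i ∈ Finset.range m,
        ((if n - 1 ∈ (phi n)^[i] S then (1 : ℤ) else 0)
          + 2 * (if n ∈ (phi n)^[i] S then (1 : ℤ) else 0)) = m) := by
  have hn1 : 1 ≤ n := by omega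
  have hmaps : Set.MapsTo (phi n) {T | IndepSet n T} {T | IndepSet n T} := fun _ hT => hT.phi
  have hper : Function.IsPeriodicPt (phi n) m S := hfix
  constructor
  · have := hper.sum_range_iterate_eq_nsmul hmaps (c := 1) (g := chi 1)
      (h := fun T => 2 * chi 1 T + chi 2 T)
      (fun T hT => by rw [chi_one_phi hn1 hT]; ring) hS
    simpa [chi] using this
  · have := hper.sum_range_iterate_eq_nsmul hmaps (c := 1) (g := fun T => chi (n - 1) T + chi n T)
      (h := fun T => chi (n - 1) T + 2 * chi n T)
      (fun T hT => by rw [chi_pred_add_chi_phi hn1 hT]; ring) hS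
    simpa [chi] using this

/-- For `n ≥ 2`, the statistics `2χ_1 + χ_2` and `χ_{n−1} + 2χ_n` are both 1-mesic
under the action of `φ` on `I_n`. -/
theorem stmt1 (n : ℕ) (hn : 2 ≤ n) (S : Finset ℕ) (hS : IndepSet n S)
    (m : ℕ) (hm : 1 ≤ m) (hfix : (phi n)^[m] S = S) :
    (∑ i ∈ Finset.range m,
        (2 * (if 1 ∈ (phi n)^[i] S then (1 : ℤ) else 0)
          + (if 2 ∈ (phi n)^[i] S then (1 : ℤ) else 0)) = m)
    ∧ (∑ i ∈ Finset.range m,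
        ((if n - 1 ∈ (phi n)^[i] S then (1 : ℤ) else 0)
          + 2 * (if n ∈ (phi n)^[i] S then (1 : ℤ) else 0)) = m) :=
  stmt1_general n hn S hS m hfix
end

section
/- Let S ∈ I_n and j ∈ {1,…,n} with j ∈ S. Then: (1) if j ≠ n, then exactly one of the two statements 'j+2 ∈ S' and 'j+1 ∈ φ(S)' holds; (2) if j ≠ 1, then exactly one of the two statements 'j−2 ∈ S' and 'j−1 ∈ φ^{-1}(S)' holds. (When j+2 > n the first statement of (1) is false, and when j−2 < 1 the first statement of (2) is false.) -/
/- ### Auxiliary lemmas -/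

lemma toggle_mem_ne (n i m : ℕ) (T : Finset ℕ) (h : m ≠ i) :
    m ∈ toggle n i T ↔ m ∈ T := by
  unfold toggle
  split_ifs <;> simp [Finset.mem_erase, Finset.mem_insert, h]

lemma toggle_of_mem (n i : ℕ) (T : Finset ℕ) (h : i ∈ T) :
    toggle n i T = T.erase i := by
  unfold toggle; rw [if_pos h]

lemma toggle_of_indep (n i : ℕ) (T : Finset ℕ) (h1 : i ∉ T)
    (h2 : IndepSet n (insert i T)) : toggle n i T = insert i T := by
  unfold toggle; rw [if_neg h1, if_pos h2]

lemma toggle_of_not_indep (n i : ℕ) (T : Finset ℕ) (h1 : i ∉ T)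
    (h2 : ¬ IndepSet n (insert i T)) : toggle n i T = T := by
  unfold toggle; rw [if_neg h1, if_neg h2]

lemma toggle_indep (n i : ℕ) (T : Finset ℕ) (h : IndepSet n T) :
    IndepSet n (toggle n i T) := by
  unfold toggle
  split_ifs with h1 h2
  · refine ⟨(Finset.erase_subset _ _).trans h.1, ?_⟩
    intro a ha ha1
    exact h.2 a (Finset.mem_of_mem_erase ha) (Finset.mem_of_mem_erase ha1)
  · exact h2
  · exact h

/-- Partial left fold: toggles `1, 2, …, a` applied in order. -/
def Ffold (n a : ℕ) (S : Finset ℕ) : Finset ℕ :=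
  (List.range a).foldl (fun T k => toggle n (k + 1) T) S

lemma Ffold_zero (n : ℕ) (S : Finset ℕ) : Ffold n 0 S = S := rfl

lemma Ffold_succ (n a : ℕ) (S : Finset ℕ) :
    Ffold n (a + 1) S = toggle n (a + 1) (Ffold n a S) := by
  unfold Ffold
  rw [List.range_succ, List.foldl_append]
  simp

lemma phi_eq_Ffold (n : ℕ) (S : Finset ℕ) : phi n S = Ffold n n S := rfl

lemma mem_Ffold_of_lt (n : ℕ) (S : Finset ℕ) (m : ℕ) :
    ∀ a, a < m → (m ∈ Ffold n a S ↔ m ∈ S) := by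
  intro a
  induction a with
  | zero => intro _; rw [Ffold_zero]
  | succ a ih =>
    intro h
    rw [Ffold_succ, toggle_mem_ne n _ _ _ (by omega)]
    exact ih (by omega)

lemma Ffold_indep (n : ℕ) (S : Finset ℕ) (h : IndepSet n S) (a : ℕ) :
    IndepSet n (Ffold n a S) := by
  induction a with
  | zero => rw [Ffold_zero]; exact h
  | succ a ih => rw [Ffold_succ]; exact toggle_indep _ _ _ ih

lemma mem_Ffold_stable (n : ℕ) (S : Finset ℕ) (m : ℕ) :
    ∀ a, m ≤ a → (m ∈ Ffold n a S ↔ m ∈ Ffold n m S) := by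
  intro a
  induction a with
  | zero => intro h; rw [Nat.le_zero.mp h]
  | succ a ih =>
    intro h
    rcases Nat.eq_or_lt_of_le h with h' | h'
    · rw [h']
    · rw [Ffold_succ, toggle_mem_ne n _ _ _ (by omega)]
      exact ih (by omega)

/-- Partial right fold: toggles `1, 2, …, a` applied with `a` first (descending). -/
def Gfold (n a : ℕ) (S : Finset ℕ) : Finset ℕ :=
  (List.range a).foldr (fun k T => toggle n (k + 1) T) S

lemma Gfold_zero (n : ℕ) (S : Finset ℕ) : Gfold n 0 S = S := rfl

lemma Gfold_succ (n a : ℕ) (S : Finset ℕ) :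
    Gfold n (a + 1) S = Gfold n a (toggle n (a + 1) S) := by
  unfold Gfold
  rw [List.range_succ, List.foldr_append]
  simp

lemma phiInv_eq_Gfold (n : ℕ) (S : Finset ℕ) : phiInv n S = Gfold n n S := rfl

lemma mem_Gfold_of_lt (n : ℕ) (S : Finset ℕ) (m : ℕ) :
    ∀ a (T : Finset ℕ), a < m → (m ∈ Gfold n a T ↔ m ∈ T) := by
  intro a
  induction a with
  | zero => intro T _; rw [Gfold_zero]
  | succ a ih =>
    intro T h
    rw [Gfold_succ, ih _ (by omega), toggle_mem_ne n _ _ _ (by omega)]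

/-- `Kdesc n m S`: toggles at `n, n-1, …, n-m+1` applied (largest first). -/
def Kdesc (n : ℕ) : ℕ → Finset ℕ → Finset ℕ
  | 0, S => S
  | m + 1, S => toggle n (n - m) (Kdesc n m S)

lemma Gfold_eq_Kdesc (n : ℕ) (S : Finset ℕ) :
    ∀ m, m ≤ n → Gfold n n S = Gfold n (n - m) (Kdesc n m S) := by
  intro m
  induction m with
  | zero => intro _; simp [Kdesc]
  | succ m ih =>
    intro h
    have h1 : n - m = (n - (m + 1)) + 1 := by omega
    rw [ih (by omega), h1, Gfold_succ]
    have h2 : (n - (m + 1)) + 1 = n - m := by omega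
    rw [h2]
    rfl

lemma mem_Kdesc_of_le (n : ℕ) (S : Finset ℕ) (i : ℕ) :
    ∀ m, m ≤ n → i ≤ n - m → (i ∈ Kdesc n m S ↔ i ∈ S) := by
  intro m
  induction m with
  | zero => intro _ _; rfl
  | succ m ih =>
    intro h hi
    show i ∈ toggle n (n - m) (Kdesc n m S) ↔ i ∈ S
    rw [toggle_mem_ne n _ _ _ (by omega)]
    exact ih (by omega) (by omega)

lemma Kdesc_indep (n : ℕ) (S : Finset ℕ) (h : IndepSet n S) (m : ℕ) :
    IndepSet n (Kdesc n m S) := by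
  induction m with
  | zero => exact h
  | succ m ih => exact toggle_indep _ _ _ ih

lemma xor_of_iff_not {A B : Prop} (h : B ↔ ¬ A) [Decidable A] : Xor' A B := by
  by_cases hA : A
  · exact Or.inl ⟨hA, fun hB => (h.mp hB) hA⟩
  · exact Or.inr ⟨h.mpr hA, hA⟩

/-- If `j ∈ S` then: (1) if `j ≠ n`, exactly one of `j+2 ∈ S` and `j+1 ∈ φ(S)` holds;
(2) if `j ≠ 1`, exactly one of `j−2 ∈ S` and `j−1 ∈ φ⁻¹(S)` holds. -/
theorem stmt8 (n : ℕ) (hn : 2 ≤ n) (S : Finset ℕ) (hS : IndepSet n S)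
    (j : ℕ) (hj1 : 1 ≤ j) (hjn : j ≤ n) (hjS : j ∈ S) :
    (j ≠ n → Xor' (j + 2 ∈ S) (j + 1 ∈ phi n S))
    ∧ (j ≠ 1 → Xor' (j - 2 ∈ S) (j - 1 ∈ phiInv n S)) := by
  constructor
  · -- part (1)
    intro hjne
    have hjlt : j < n := lt_of_le_of_ne hjn hjne
    -- the state after toggles 1..j : j has been erased
    have hmemj : j ∈ Ffold n (j - 1) S := by
      rw [mem_Ffold_of_lt n S j (j - 1) (by omega)]; exact hjS
    have hFj : Ffold n j S = (Ffold n (j - 1) S).erase j := by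
      have : j = (j - 1) + 1 := by omega
      rw [this, Ffold_succ, ← this, toggle_of_mem _ _ _ hmemj]
    have hjnot : j ∉ Ffold n j S := by rw [hFj]; exact Finset.notMem_erase _ _
    have hj1notS : j + 1 ∉ S := fun h => hS.2 j hjS h
    have hj1not : j + 1 ∉ Ffold n j S := by
      rw [mem_Ffold_of_lt n S (j + 1) j (by omega)]; exact hj1notS
    have hj2mem : j + 2 ∈ Ffold n j S ↔ j + 2 ∈ S :=
      mem_Ffold_of_lt n S (j + 2) j (by omega)
    have hindep : IndepSet n (Ffold n j S) := Ffold_indep n S hS j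
    have key : j + 1 ∈ Ffold n (j + 1) S ↔ j + 2 ∉ S := by
      rw [Ffold_succ]
      by_cases hc : j + 2 ∈ S
      · rw [toggle_of_not_indep _ _ _ hj1not]
        · simp [hj1not, hc]
        · intro hbad
          exact hbad.2 (j + 1) (Finset.mem_insert_self _ _)
            (Finset.mem_insert_of_mem (hj2mem.mpr hc))
      · rw [toggle_of_indep _ _ _ hj1not]
        · simp [hc]
        · constructor
          · intro x hx
            rcases Finset.mem_insert.mp hx with h | h
            · subst h; simp [Finset.mem_Icc]; omega
            · exact hindep.1 h
          · intro i hi hi1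
            rcases Finset.mem_insert.mp hi with h | h
            · subst h
              rcases Finset.mem_insert.mp hi1 with h' | h'
              · omega
              · exact absurd (hj2mem.mp h') hc
            · rcases Finset.mem_insert.mp hi1 with h' | h'
              · have : i = j := by omega
                exact hjnot (this ▸ h)
              · exact hindep.2 i h h'
    have final : j + 1 ∈ phi n S ↔ j + 2 ∉ S := by
      rw [phi_eq_Ffold, mem_Ffold_stable n S (j + 1) n (by omega)]
      exact key
    exact xor_of_iff_not final
  · -- part (2)
    intro hjne
    have hj2 : 2 ≤ j := by omega
    set m := n - j with hm
    have hnm : n - m = j := by omega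
    have hnm1 : n - (m + 1) = j - 1 := by omega
    have hnm2 : n - (m + 2) = j - 2 := by omega
    -- state after toggles n..(j+1): membership of indices ≤ j unchanged
    have hjmem : j ∈ Kdesc n m S := by
      rw [mem_Kdesc_of_le n S j m (by omega) (by omega)]; exact hjS
    -- toggle at j erases it
    have hK1 : Kdesc n (m + 1) S = (Kdesc n m S).erase j := by
      show toggle n (n - m) (Kdesc n m S) = _
      rw [hnm, toggle_of_mem _ _ _ hjmem]
    have hjnot : j ∉ Kdesc n (m + 1) S := by
      rw [hK1]; exact Finset.notMem_erase _ _
    have hjm1notS : j - 1 ∉ S := by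
      intro h
      have := hS.2 (j - 1) h
      have : j - 1 + 1 = j := by omega
      exact hS.2 (j - 1) ‹j - 1 ∈ S› (by rwa [this])
    have hjm1not : j - 1 ∉ Kdesc n (m + 1) S := by
      rw [hK1, Finset.mem_erase]
      rw [mem_Kdesc_of_le n S (j - 1) m (by omega) (by omega)]
      tauto
    have hjm2mem : j - 2 ∈ Kdesc n (m + 1) S ↔ j - 2 ∈ S := by
      rw [hK1, Finset.mem_erase]
      rw [mem_Kdesc_of_le n S (j - 2) m (by omega) (by omega)]
      constructor
      · tauto
      · intro h; exact ⟨by omega, h⟩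
    have hindep : IndepSet n (Kdesc n (m + 1) S) := Kdesc_indep n S hS (m + 1)
    have key : j - 1 ∈ Kdesc n (m + 2) S ↔ j - 2 ∉ S := by
      show j - 1 ∈ toggle n (n - (m + 1)) (Kdesc n (m + 1) S) ↔ _
      rw [hnm1]
      by_cases hc : j - 2 ∈ S
      · rw [toggle_of_not_indep _ _ _ hjm1not]
        · simp [hjm1not, hc]
        · intro hbad
          have h2 : j - 2 ∈ insert (j - 1) (Kdesc n (m + 1) S) :=
            Finset.mem_insert_of_mem (hjm2mem.mpr hc)
          have h3 : j - 2 + 1 = j - 1 := by omega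
          exact hbad.2 (j - 2) h2 (by rw [h3]; exact Finset.mem_insert_self _ _)
      · rw [toggle_of_indep _ _ _ hjm1not]
        · simp [hc]
        · constructor
          · intro x hx
            rcases Finset.mem_insert.mp hx with h | h
            · subst h; simp [Finset.mem_Icc]; omega
            · exact hindep.1 h
          · intro i hi hi1
            rcases Finset.mem_insert.mp hi with h | h
            · rcases Finset.mem_insert.mp hi1 with h' | h'
              · omega
              · have : i + 1 = j := by omega
                exact hjnot (this ▸ h')
            · rcases Finset.mem_insert.mp hi1 with h' | h'
              · have hij : i = j - 2 := by omega
                exact absurd (hjm2mem.mp (hij ▸ h)) hc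
              · exact hindep.2 i h h'
    have final : j - 1 ∈ phiInv n S ↔ j - 2 ∉ S := by
      rw [phiInv_eq_Gfold, Gfold_eq_Kdesc n S (m + 2) (by omega), hnm2,
        mem_Gfold_of_lt n S (j - 1) (j - 2) _ (by omega)]
      exact key
    exact xor_of_iff_not final
end

section
/- For every integer n ≥ 1, the number of orbits of the cyclic rotation action of ℤ/nℤ on the set of binary strings s of length n with no two cyclically consecutive 1s (i.e., no index i, taken modulo n, with s_i = 1 and s_{i+1} = 1) equals (1/n) ∑_{d | n} φ(n/d) (F_{d−1} + F_{d+1}), where φ is Euler's totient function. -/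
/-!
Burnside's lemma: the number of orbits times `n` is the number of pairs (rotation, fixed word).
A word fixed by the rotation by `a` is periodic with period `d = gcd(n, a)`, so it is the pullback
of an admissible cyclic word of length `d`; each divisor `d` arises from `φ(n/d)` rotations.
Admissible cyclic words of length `d` are closed walks of length `d` in the graph of the relation,
so there are `trace (A ^ d)` of them, `A` the transfer matrix. For "no two consecutive ones"
`A = [[1, 1], [1, 0]]`, whose powers hold Fibonacci numbers, and
`trace (A ^ d) = F (d - 1) + F (d + 1)`.
-/

open Finset

theorem Function.Periodic.natCast_gcd_val {β : Type*} {n : ℕ} [NeZero n] {f : ZMod n → β}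
    {a : ZMod n} (h : Function.Periodic f a) : Function.Periodic f (n.gcd a.val : ZMod n) := by
  have hgcd : (n.gcd a.val : ZMod n) = (n.gcdB a.val : ℤ) * a := by
    have := congrArg (Int.cast : ℤ → ZMod n) (Nat.gcd_eq_gcd_ab n a.val)
    push_cast [ZMod.natCast_self, ZMod.natCast_zmod_val] at this
    rw [this, zero_mul, zero_add, mul_comm]
  rw [hgcd]
  exact h.int_mul _

theorem Function.Periodic.apply_val_castHom {β : Type*} {n d : ℕ} [NeZero n] (hd : d ∣ n)
    {f : ZMod n → β} (h : Function.Periodic f (d : ZMod n)) (x : ZMod n) :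
    f ((ZMod.castHom hd (ZMod d) x).val : ZMod n) = f x := by
  obtain ⟨v, rfl⟩ : ∃ v : ℕ, (v : ZMod n) = x := ⟨x.val, ZMod.natCast_zmod_val x⟩
  rw [map_natCast, ZMod.val_natCast]
  conv_rhs => rw [← Nat.mod_add_div' v d, Nat.cast_add, Nat.cast_mul, h.nat_mul]

theorem ZMod.sum_comp_gcd_val {M : Type*} [AddCommMonoid M] (n : ℕ) [NeZero n] (f : ℕ → M) :
    ∑ a : ZMod n, f (n.gcd a.val) = ∑ d ∈ n.divisors, (n / d).totient • f d := by
  obtain ⟨k, rfl⟩ := Nat.exists_eq_succ_of_ne_zero (NeZero.ne n)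
  -- `ZMod (k + 1)` is `Fin (k + 1)` by definition, and `ZMod.val` is `Fin.val`.
  have hrange : ∑ a : ZMod (k + 1), f ((k + 1).gcd a.val) =
      ∑ i ∈ range (k + 1), f ((k + 1).gcd i) :=
    Fin.sum_univ_eq_sum_range (fun i => f ((k + 1).gcd i)) (k + 1)
  rw [hrange, ← sum_fiberwise_of_maps_to (t := (k + 1).divisors) (g := (k + 1).gcd)
    (fun i _ => Nat.mem_divisors.mpr ⟨Nat.gcd_dvd_left _ _, by omega⟩)]
  refine sum_congr rfl fun d hd => ?_
  rw [sum_congr rfl fun i hi => congrArg f (mem_filter.mp hi).2, sum_const,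
    Nat.totient_div_of_dvd (Nat.dvd_of_mem_divisors hd)]

section CyclicChains

variable {α : Type*} {r : α → α → Prop}

theorem isChain_ofFn_zmod_iff {m : ℕ} [NeZero m] (s : ZMod m → α) :
    (List.ofFn fun j : Fin (m + 1) => s (j : ℕ)).IsChain r ↔ ∀ i, r (s i) (s (i + 1)) := by
  rw [List.isChain_ofFn]
  refine ⟨fun h i => ?_, fun h i _ => by simpa using h i⟩
  simpa using h i.val (by simpa using i.val_lt)

theorem ofFn_getD_zmod_val {m : ℕ} [NeZero m] {l : List α} {a : α} (hlen : l.length = m + 1)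
    (hhead : l.head? = some a) (hlast : l.getLast? = some a) :
    (List.ofFn fun j : Fin (m + 1) => l.getD (j : ZMod m).val a) = l := by
  rw [List.head?_eq_getElem?] at hhead
  rw [List.getLast?_eq_getElem?, hlen, Nat.add_sub_cancel] at hlast
  refine List.ext_getElem (by simp [hlen]) fun j hj _ => ?_
  simp only [List.length_ofFn] at hj
  rw [List.getElem_ofFn, List.getD_eq_getElem?_getD, ZMod.val_natCast]
  rcases (Nat.lt_succ_iff_lt_or_eq.mp hj) with hjm | rfl
  · simp [Nat.mod_eq_of_lt hjm, hlen, hjm.trans (Nat.lt_succ_self m)]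
  · simpa [hhead] using ((List.getElem_eq_iff _).mpr hlast).symm

theorem Function.Surjective.forall_rel_comp_add_one_iff {R S : Type*} [Ring R] [Ring S]
    {π : R →+* S} (hπ : Function.Surjective π) (t : S → α) :
    (∀ i, r (t (π i)) (t (π (i + 1)))) ↔ ∀ j, r (t j) (t (j + 1)) := by
  refine ⟨fun h j => ?_, fun h i => by simpa only [map_add, map_one] using h (π i)⟩
  obtain ⟨i, rfl⟩ := hπ j
  simpa only [map_add, map_one] using h i

variable (r) in
abbrev CyclicChain (m : ℕ) : Type _ := {s : ZMod m → α // ∀ i, r (s i) (s (i + 1))}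

instance (m : ℕ) : AddAction (ZMod m) (CyclicChain r m) where
  vadd k s := ⟨fun i => s.1 (i + k), fun i => by simpa only [add_right_comm] using s.2 (i + k)⟩
  zero_vadd s := Subtype.ext <| funext fun i => congrArg s.1 (add_zero i)
  add_vadd k l s := Subtype.ext <| funext fun i => congrArg s.1 (add_assoc i k l).symm

theorem card_fixedBy_cyclicChain {n : ℕ} [NeZero n] (a : ZMod n) :
    Nat.card (AddAction.fixedBy (CyclicChain r n) a) = Nat.card (CyclicChain r (n.gcd a.val)) := by
  set d := n.gcd a.val
  have hd : d ∣ n := Nat.gcd_dvd_left _ _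
  set π := ZMod.castHom hd (ZMod d)
  have hπ : Function.Surjective π := ZMod.castHom_surjective hd
  have hπa : π a = 0 := by
    rw [← ZMod.natCast_zmod_val a, map_natCast, ZMod.natCast_eq_zero_iff]
    exact Nat.gcd_dvd_right _ _
  let F (t : CyclicChain r d) : AddAction.fixedBy (CyclicChain r n) a :=
    ⟨⟨t.1 ∘ π, (hπ.forall_rel_comp_add_one_iff t.1).mpr t.2⟩,
      Subtype.ext <| funext fun i => congrArg t.1 (by rw [map_add, hπa, add_zero])⟩
  refine (Nat.card_eq_of_bijective F ⟨fun t t' h => ?_, fun s => ?_⟩).symm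
  · exact Subtype.ext (hπ.injective_comp_right (congrArg (fun s => s.1.1) h))
  · have hper : Function.Periodic s.1.1 a := fun i => congrFun (congrArg Subtype.val s.2) i
    have hcomp : ∀ x, s.1.1 ((π x).val : ZMod n) = s.1.1 x :=
      hper.natCast_gcd_val.apply_val_castHom hd
    refine ⟨⟨fun j => s.1.1 (j.val : ZMod n), ?_⟩, Subtype.ext (Subtype.ext (funext hcomp))⟩
    exact (hπ.forall_rel_comp_add_one_iff (r := r) fun j => s.1.1 (j.val : ZMod n)).mp
      fun i => by simpa only [hcomp] using s.1.2 i

theorem image_val_orbit_cyclicChain {n : ℕ} (s : CyclicChain r n) :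
    Subtype.val '' AddAction.orbit (ZMod n) s = {t | ∃ k, ∀ i, t i = s.1 (i + k)} := by
  rw [AddAction.orbit, ← Set.range_comp]
  ext t
  simp only [Set.mem_range, Function.comp_def, funext_iff, Set.mem_ofPred_eq]
  exact exists_congr fun k => forall_congr' fun i => eq_comm

theorem ncard_orbits_cyclicChain (n : ℕ) :
    Set.ncard {C : Set (ZMod n → α) | ∃ s : ZMod n → α,
        (∀ i, r (s i) (s (i + 1))) ∧ C = {t | ∃ k, ∀ i, t i = s (i + k)}} =
      Nat.card (AddAction.orbitRel.Quotient (ZMod n) (CyclicChain r n)) := by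
  have hrange : {C : Set (ZMod n → α) | ∃ s : ZMod n → α,
      (∀ i, r (s i) (s (i + 1))) ∧ C = {t | ∃ k, ∀ i, t i = s (i + k)}} =
        Set.range fun ω : AddAction.orbitRel.Quotient (ZMod n) (CyclicChain r n) =>
          Subtype.val '' ω.orbit := by
    ext C
    constructor
    · rintro ⟨s, hs, rfl⟩
      exact ⟨Quotient.mk'' ⟨s, hs⟩, by
        simp only [AddAction.orbitRel.Quotient.orbit_mk, image_val_orbit_cyclicChain]⟩
    · rintro ⟨ω, rfl⟩
      induction ω using Quotient.inductionOn' with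
      | h s =>
        exact ⟨s.1, s.2, by
          simp only [AddAction.orbitRel.Quotient.orbit_mk, image_val_orbit_cyclicChain]⟩
  rw [hrange]
  exact Set.ncard_range_of_injective <| (Set.image_injective.mpr Subtype.val_injective).comp
    AddAction.orbitRel.Quotient.orbit_injective

variable [DecidableRel r]

variable (r) in
def relMatrix : Matrix α α ℕ := Matrix.of fun a b => if r a b then 1 else 0

variable [Fintype α] [DecidableEq α]

variable (r) in
def chainsFromTo : ℕ → α → α → Finset (List α)
  | 0, a, b => if a = b then {[a]} else ∅
  | k + 1, a, b => (univ.filter (r a)).biUnion fun c => (chainsFromTo k c b).image (List.cons a)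

theorem mem_chainsFromTo {k : ℕ} {a b : α} {l : List α} :
    l ∈ chainsFromTo r k a b ↔
      l.length = k + 1 ∧ l.IsChain r ∧ l.head? = some a ∧ l.getLast? = some b := by
  induction k generalizing a l with
  | zero =>
    rcases l with _ | ⟨x, _ | ⟨y, l⟩⟩ <;> by_cases a = b <;> grind [chainsFromTo]
  | succ k ih =>
    rcases l with _ | ⟨x, _ | ⟨y, l⟩⟩ <;> simp [chainsFromTo, ih, List.isChain_cons_cons]
    grind

theorem card_chainsFromTo (k : ℕ) (a b : α) :
    #(chainsFromTo r k a b) = (relMatrix r ^ k) a b := by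
  induction k generalizing a with
  | zero => by_cases a = b <;> simp_all [chainsFromTo]
  | succ k ih =>
    have hdisj : (univ.filter (r a) : Set α).PairwiseDisjoint
        fun c => (chainsFromTo r k c b).image (List.cons a) := by
      intro c _ c' _ hne
      simp only [Function.onFun, disjoint_left, mem_image]
      rintro _ ⟨l, hl, rfl⟩ ⟨l', hl', hll'⟩
      obtain ⟨-, -, hc, -⟩ := mem_chainsFromTo.mp hl
      obtain ⟨-, -, hc', -⟩ := mem_chainsFromTo.mp hl'
      exact hne (Option.some_injective _ (hc.symm.trans ((List.cons_injective hll').symm ▸ hc')))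
    rw [chainsFromTo, card_biUnion hdisj, pow_succ', Matrix.mul_apply, sum_filter]
    simp [card_image_of_injective _ List.cons_injective, ih, relMatrix]

theorem ofFn_getD_zmod_val_of_mem_chainsFromTo {m : ℕ} [NeZero m] {a : α} {l : List α}
    (hl : l ∈ chainsFromTo r m a a) :
    (List.ofFn fun j : Fin (m + 1) => l.getD (j : ZMod m).val a) = l :=
  have h := mem_chainsFromTo.mp hl
  ofFn_getD_zmod_val h.1 h.2.2.1 h.2.2.2

/-- The cyclic word `s` is read as the closed chain `s 0, s 1, …, s m = s 0`. -/
theorem card_cyclicChain (m : ℕ) [NeZero m] :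
    Fintype.card (CyclicChain r m) = (relMatrix r ^ m).trace := by
  simp_rw [Fintype.card_subtype, Matrix.trace, Matrix.diag, ← card_chainsFromTo, ← card_sigma]
  refine card_nbij' (fun s => ⟨s 0, List.ofFn fun j : Fin (m + 1) => s (j : ℕ)⟩)
    (fun p x => p.2.getD x.val p.1) ?_ ?_ ?_ ?_
  · intro s hs
    refine mem_sigma.mpr ⟨mem_univ _, mem_chainsFromTo.mpr ⟨List.length_ofFn,
      (isChain_ofFn_zmod_iff s).mpr (mem_filter.mp hs).2, ?_, ?_⟩⟩ <;>
    simp [List.head?_eq_getElem?, List.getLast?_eq_getElem?, -List.ofFn_succ]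
  · rintro ⟨a, l⟩ hl
    have hl := (mem_sigma.mp hl).2
    refine mem_filter.mpr ⟨mem_univ _, (isChain_ofFn_zmod_iff fun x => l.getD x.val a).mp ?_⟩
    rw [ofFn_getD_zmod_val_of_mem_chainsFromTo hl]
    exact (mem_chainsFromTo.mp hl).2.1
  · intro s _
    funext x
    dsimp only
    rw [List.getD_eq_getElem?_getD, List.getElem?_ofFn, dif_pos (by have := x.val_lt; omega)]
    simp
  · rintro ⟨a, l⟩ hl
    have hl := (mem_sigma.mp hl).2
    have hhead : l.getD (0 : ZMod m).val a = a := by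
      simp [List.getD_eq_getElem?_getD, ← List.head?_eq_getElem?, (mem_chainsFromTo.mp hl).2.2.1]
    simp only [hhead, ofFn_getD_zmod_val_of_mem_chainsFromTo hl]

theorem card_orbits_cyclicChain_mul (n : ℕ) [NeZero n] :
    Nat.card (AddAction.orbitRel.Quotient (ZMod n) (CyclicChain r n)) * n =
      ∑ d ∈ n.divisors, (n / d).totient * (relMatrix r ^ d).trace := by
  classical
  have hburnside :=
    AddAction.sum_card_fixedBy_eq_card_orbits_mul_card_addGroup (ZMod n) (CyclicChain r n)
  rw [ZMod.card, ← Nat.card_eq_fintype_card] at hburnside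
  rw [← hburnside]
  simp_rw [← smul_eq_mul, ← ZMod.sum_comp_gcd_val]
  refine sum_congr rfl fun a _ => ?_
  have : NeZero (n.gcd a.val) := ⟨(Nat.gcd_pos_of_pos_left _ (NeZero.pos n)).ne'⟩
  rw [← Nat.card_eq_fintype_card, card_fixedBy_cyclicChain, Nat.card_eq_fintype_card,
    card_cyclicChain]

end CyclicChains

abbrev NotBothTrue : Bool → Bool → Prop := fun a b => ¬(a = true ∧ b = true)

theorem relMatrix_notBothTrue_pow_succ_apply (k : ℕ) (a b : Bool) :
    (relMatrix NotBothTrue ^ (k + 1)) a b = Nat.fib (k + 2 - a.toNat - b.toNat) := by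
  induction k generalizing a with
  | zero => cases a <;> cases b <;> rfl
  | succ k ih =>
    rw [pow_succ', Matrix.mul_apply, Fintype.sum_bool, ih, ih]
    cases a <;> cases b <;> simp [relMatrix, Nat.fib_add_two]

theorem trace_relMatrix_notBothTrue_pow {m : ℕ} (hm : m ≠ 0) :
    (relMatrix NotBothTrue ^ m).trace = Nat.fib (m - 1) + Nat.fib (m + 1) := by
  obtain ⟨k, rfl⟩ := Nat.exists_eq_succ_of_ne_zero hm
  simp [Matrix.trace, relMatrix_notBothTrue_pow_succ_apply]

/-- The number of binary necklaces of length `n` with no two cyclically consecutive 1s,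
i.e. orbits of the cyclic rotation action of `ℤ/nℤ` on binary strings `ZMod n → Bool`
with no index `i` such that positions `i` and `i+1` both carry a 1, equals
`(1/n) ∑_{d ∣ n} φ(n/d) (F_{d−1} + F_{d+1})`. -/
theorem stmt15 (n : ℕ) (hn : 1 ≤ n) :
    (Set.ncard {C : Set (ZMod n → Bool) |
        ∃ s : ZMod n → Bool,
          (∀ i : ZMod n, ¬(s i = true ∧ s (i + 1) = true)) ∧
          C = {t | ∃ r : ZMod n, ∀ i, t i = s (i + r)}} : ℚ)
      = (1 / (n : ℚ)) * ∑ d ∈ n.divisors,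
          (Nat.totient (n / d) : ℚ) * ((Nat.fib (d - 1) : ℚ) + (Nat.fib (d + 1) : ℚ)) := by
  have : NeZero n := ⟨by omega⟩
  have hcount := card_orbits_cyclicChain_mul (r := NotBothTrue) n
  rw [sum_congr rfl fun d hd => by
    rw [trace_relMatrix_notBothTrue_pow (Nat.pos_of_mem_divisors hd).ne']] at hcount
  rw [ncard_orbits_cyclicChain (r := NotBothTrue), one_div,
    eq_inv_mul_iff_mul_eq₀ (by positivity), mul_comm]
  exact_mod_cast hcount
end

section
/- For n ≥ 2, the number of independent sets S ∈ I_n satisfying φ^2(S) = S and φ(S) ≠ S is 2 if n is odd and 0 if n is even. Consequently, a φ-orbit of size 2 exists exactly when n is odd, in which case it is unique. -/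
/-! ### Auxiliary: partial toggling -/

def psi (n k : ℕ) (S : Finset ℕ) : Finset ℕ :=
  (List.range k).foldl (fun T j => toggle n (j + 1) T) S

lemma phi_eq_psi (n : ℕ) (S : Finset ℕ) : phi n S = psi n n S := rfl

lemma psi_succ (n k : ℕ) (S : Finset ℕ) :
    psi n (k + 1) S = toggle n (k + 1) (psi n k S) := by
  simp [psi, List.range_succ]

lemma mem_toggle_ne {n i j : ℕ} {S : Finset ℕ} (h : j ≠ i) :
    j ∈ toggle n i S ↔ j ∈ S := by
  unfold toggle
  split_ifs with h1 h2
  · simp [Finset.mem_erase, h]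
  · simp [Finset.mem_insert, h]
  · rfl

lemma indep_toggle {n i : ℕ} {S : Finset ℕ} (h : IndepSet n S) :
    IndepSet n (toggle n i S) := by
  unfold toggle
  split_ifs with h1 h2
  · exact ⟨(Finset.erase_subset _ _).trans h.1,
      fun j hj hc => h.2 j (Finset.mem_of_mem_erase hj) (Finset.mem_of_mem_erase hc)⟩
  · exact h2
  · exact h

lemma indep_psi {n k : ℕ} {S : Finset ℕ} (h : IndepSet n S) :
    IndepSet n (psi n k S) := by
  induction k with
  | zero => exact h
  | succ k ih => rw [psi_succ]; exact indep_toggle ih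

lemma indep_phi {n : ℕ} {S : Finset ℕ} (h : IndepSet n S) :
    IndepSet n (phi n S) := indep_psi h

lemma mem_psi_gt {n k i : ℕ} {S : Finset ℕ} (h : k < i) :
    i ∈ psi n k S ↔ i ∈ S := by
  induction k with
  | zero => rfl
  | succ k ih =>
      rw [psi_succ, mem_toggle_ne (by omega)]
      exact ih (by omega)

lemma mem_psi_mono {n i k m : ℕ} {S : Finset ℕ} (hik : i ≤ k) (hkm : k ≤ m) :
    i ∈ psi n m S ↔ i ∈ psi n k S := by
  induction m with
  | zero =>
      have : k = 0 := by omega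
      subst this; rfl
  | succ m ih =>
      rcases Nat.lt_or_ge k (m + 1) with h | h
      · rw [psi_succ, mem_toggle_ne (by omega)]
        exact ih (by omega)
      · have : k = m + 1 := by omega
        subst this; rfl

/-- Key characterization of `phi`: left-to-right toggling satisfies a local recursion. -/
lemma phi_char {n : ℕ} {S : Finset ℕ} (hS : IndepSet n S) {i : ℕ}
    (h1 : 1 ≤ i) (h2 : i ≤ n) :
    i ∈ phi n S ↔ (i ∉ S ∧ i + 1 ∉ S ∧ i - 1 ∉ phi n S) := by
  obtain ⟨j, rfl⟩ : ∃ j, i = j + 1 := ⟨i - 1, by omega⟩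
  set U := psi n j S with hU
  have hUind : IndepSet n U := indep_psi hS
  have hmem : j + 1 ∈ phi n S ↔ j + 1 ∈ toggle n (j + 1) U := by
    have := mem_psi_mono (S := S) (n := n) (le_refl (j + 1)) h2
    rw [psi_succ] at this
    exact this
  have hself : j + 1 ∈ U ↔ j + 1 ∈ S := mem_psi_gt (by omega)
  have hnext : j + 2 ∈ U ↔ j + 2 ∈ S := mem_psi_gt (by omega)
  have hprev : j ∈ U ↔ j ∈ phi n S :=
    (mem_psi_mono (S := S) (n := n) (le_refl j) (by omega)).symm
  simp only [Nat.add_sub_cancel]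
  rw [hmem]
  unfold toggle
  split_ifs with ha hb
  · simp only [Finset.mem_erase, ne_eq, not_true_eq_false, false_and, false_iff]
    rw [hself] at ha
    tauto
  · have haS : j + 1 ∉ S := fun h => ha (hself.mpr h)
    simp only [Finset.mem_insert, true_or, true_iff]
    refine ⟨haS, ?_, ?_⟩
    · intro hc
      exact hb.2 (j + 1) (Finset.mem_insert_self _ _)
        (Finset.mem_insert_of_mem (hnext.mpr hc))
    · intro hc
      exact hb.2 j (Finset.mem_insert_of_mem (hprev.mpr hc)) (Finset.mem_insert_self _ _)
  · have haS : j + 1 ∉ S := fun h => ha (hself.mpr h)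
    constructor
    · intro hc; exact absurd hc ha
    · rintro ⟨-, h2', h3'⟩
      exfalso; apply hb
      constructor
      · intro x hx
        rcases Finset.mem_insert.mp hx with rfl | hxU
        · exact Finset.mem_Icc.mpr ⟨by omega, by omega⟩
        · exact hUind.1 hxU
      · intro x hx hc
        rcases Finset.mem_insert.mp hx with rfl | hxU
        · rcases Finset.mem_insert.mp hc with h | h
          · omega
          · exact h2' (hnext.mp h)
        · rcases Finset.mem_insert.mp hc with h | h
          · have : x = j := by omega
            subst this
            exact h3' (hprev.mp hxU)
          · exact hUind.2 x hxU h

lemma mem_Icc_of_mem_indep {n i : ℕ} {S : Finset ℕ} (hS : IndepSet n S) (h : i ∈ S) :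
    1 ≤ i ∧ i ≤ n := by
  have := hS.1 h
  rw [Finset.mem_Icc] at this
  exact this

/-! ### The two special sets -/

def oddSet (n : ℕ) : Finset ℕ := (Finset.Icc 1 n).filter (fun i => Odd i)

lemma mem_oddSet {n i : ℕ} : i ∈ oddSet n ↔ (1 ≤ i ∧ i ≤ n ∧ i % 2 = 1) := by
  simp [oddSet, Finset.mem_Icc, Nat.odd_iff]
  tauto

lemma indep_oddSet (n : ℕ) : IndepSet n (oddSet n) := by
  constructor
  · exact Finset.filter_subset _ _
  · intro i hi hc
    rw [mem_oddSet] at hi hc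
    omega

lemma indep_empty (n : ℕ) : IndepSet n (∅ : Finset ℕ) :=
  ⟨Finset.empty_subset _, by simp⟩

lemma phi_empty (n : ℕ) : phi n ∅ = oddSet n := by
  have hind := indep_empty n
  ext i
  rw [mem_oddSet]
  induction i using Nat.strong_induction_on with
  | _ i ih =>
    by_cases hi : 1 ≤ i ∧ i ≤ n
    · obtain ⟨hi1, hi2⟩ := hi
      rw [phi_char hind hi1 hi2]
      simp only [Finset.notMem_empty, not_false_eq_true, true_and]
      by_cases h1 : i = 1
      · subst h1
        have h0 : (0 : ℕ) ∉ phi n ∅ := fun hc => by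
          have := mem_Icc_of_mem_indep (indep_phi hind) hc; omega
        exact ⟨fun _ => ⟨le_rfl, hi2, rfl⟩, fun _ => by simpa using h0⟩
      · have hp := ih (i - 1) (by omega)
        rw [hp]
        omega
    · constructor
      · intro hc
        have := mem_Icc_of_mem_indep (indep_phi hind) hc
        omega
      · intro hc; omega

lemma phi_oddSet {n : ℕ} (hodd : n % 2 = 1) : phi n (oddSet n) = ∅ := by
  ext i
  simp only [Finset.notMem_empty, iff_false]
  intro hc
  have hb := mem_Icc_of_mem_indep (indep_phi (indep_oddSet n)) hc
  rw [phi_char (indep_oddSet n) hb.1 hb.2] at hc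
  obtain ⟨hA, hB, -⟩ := hc
  rw [mem_oddSet] at hA hB
  omega

/-! ### The rigidity argument -/

lemma key {n : ℕ} (hn : 2 ≤ n) {S T : Finset ℕ} (hS : IndepSet n S) (hT : IndepSet n T)
    (cS : ∀ i, 1 ≤ i → i ≤ n → (i ∈ T ↔ i ∉ S ∧ i + 1 ∉ S ∧ i - 1 ∉ T))
    (cT : ∀ i, 1 ≤ i → i ≤ n → (i ∈ S ↔ i ∉ T ∧ i + 1 ∉ T ∧ i - 1 ∉ S))
    (h1 : 1 ∈ S) :
    n % 2 = 1 ∧ ∀ i, 1 ≤ i → i ≤ n → ((i ∈ S ↔ i % 2 = 1) ∧ i ∉ T) := by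
  have C : ∀ i, 1 ≤ i → i ≤ n → ((i ∈ S ↔ i % 2 = 1) ∧ i ∉ T) := by
    intro i
    induction i using Nat.strong_induction_on with
    | _ i ih =>
      intro hi1 hin
      match i, hi1 with
      | 1, _ =>
          refine ⟨⟨fun _ => rfl, fun _ => h1⟩, fun hT1 => ?_⟩
          exact ((cS 1 le_rfl (by omega)).mp hT1).1 h1
      | 2, _ =>
          have h2S : 2 ∉ S := hS.2 1 h1
          have h2T : 2 ∉ T := ((cT 1 le_rfl (by omega)).mp h1).2.1
          exact ⟨⟨fun h => absurd h h2S, fun h => by omega⟩, h2T⟩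
      | (j + 3), _ =>
          have ha := ih (j + 1) (by omega) (by omega) (by omega)
          have hb := ih (j + 2) (by omega) (by omega) (by omega)
          by_cases hpar : (j + 3) % 2 = 1
          · -- odd position: forced into S, out of T
            have haS : j + 1 ∈ S := ha.1.mpr (by omega)
            have hbS : j + 2 ∉ S := fun h => by
              have := hb.1.mp h; omega
            have hiS : j + 3 ∈ S := by
              by_contra hc
              have := cS (j + 2) (by omega) (by omega)
              exact hb.2 (this.mpr ⟨hbS, hc, ha.2⟩)
            have hiT : j + 3 ∉ T := by
              intro hc
              exact ((cS (j + 3) (by omega) hin).mp hc).1 hiS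
            exact ⟨⟨fun _ => hpar, fun _ => hiS⟩, hiT⟩
          · -- even position
            have hbS : j + 2 ∈ S := hb.1.mpr (by omega)
            have hiS : j + 3 ∉ S := hS.2 (j + 2) hbS
            have hiT : j + 3 ∉ T := by
              have := (cT (j + 2) (by omega) (by omega)).mp hbS
              exact this.2.1
            exact ⟨⟨fun h => absurd h hiS, fun h => by omega⟩, hiT⟩
  refine ⟨?_, C⟩
  by_contra heven
  have hnprev := C (n - 1) (by omega) (by omega)
  have hnn := C n (by omega) le_rfl
  have hnS : n ∉ S := fun h => by have := hnn.1.mp h; omega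
  have hn1S : n + 1 ∉ S := fun h => by
    have := mem_Icc_of_mem_indep hS h; omega
  have : n ∈ T := (cS n (by omega) le_rfl).mpr ⟨hnS, hn1S, hnprev.2⟩
  exact hnn.2 this

lemma hard {n : ℕ} (hn : 2 ≤ n) {S : Finset ℕ} (hS : IndepSet n S)
    (h2 : phi n (phi n S) = S) :
    n % 2 = 1 ∧ (S = ∅ ∨ S = oddSet n) := by
  set T := phi n S with hTdef
  have hT : IndepSet n T := indep_phi hS
  have cS : ∀ i, 1 ≤ i → i ≤ n → (i ∈ T ↔ i ∉ S ∧ i + 1 ∉ S ∧ i - 1 ∉ T) :=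
    fun i a b => phi_char hS a b
  have cT : ∀ i, 1 ≤ i → i ≤ n → (i ∈ S ↔ i ∉ T ∧ i + 1 ∉ T ∧ i - 1 ∉ S) := by
    intro i a b
    have := phi_char hT a b (i := i)
    rwa [h2] at this
  have hone : 1 ∈ S ∨ 1 ∈ T := by
    by_contra h
    push_neg at h
    obtain ⟨hS1, hT1⟩ := h
    have h0T : (0 : ℕ) ∉ T := fun hc => by
      have := mem_Icc_of_mem_indep hT hc; omega
    have h0S : (0 : ℕ) ∉ S := fun hc => by
      have := mem_Icc_of_mem_indep hS hc; omega
    have h2S : 2 ∈ S := by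
      by_contra hc
      exact hT1 ((cS 1 le_rfl (by omega)).mpr ⟨hS1, hc, h0T⟩)
    have h2T : 2 ∈ T := by
      by_contra hc
      exact hS1 ((cT 1 le_rfl (by omega)).mpr ⟨hT1, hc, h0S⟩)
    exact ((cS 2 (by omega) hn).mp h2T).1 h2S
  rcases hone with h | h
  · obtain ⟨hodd, hC⟩ := key hn hS hT cS cT h
    refine ⟨hodd, Or.inr ?_⟩
    ext i
    rw [mem_oddSet]
    constructor
    · intro hi
      have hb := mem_Icc_of_mem_indep hS hi
      exact ⟨hb.1, hb.2, ((hC i hb.1 hb.2).1).mp hi⟩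
    · rintro ⟨a, b, c⟩
      exact ((hC i a b).1).mpr c
  · obtain ⟨hodd, hC⟩ := key hn hT hS cT cS h
    refine ⟨hodd, Or.inl ?_⟩
    ext i
    simp only [Finset.notMem_empty, iff_false]
    intro hi
    have hb := mem_Icc_of_mem_indep hS hi
    exact (hC i hb.1 hb.2).2 hi

/-! ### Main theorem -/

/-- The number of `S ∈ I_n` with `φ²(S) = S` and `φ(S) ≠ S` is 2 if `n` is odd and
0 if `n` is even; hence a `φ`-orbit of size 2 exists exactly when `n` is odd, and is
then unique. -/
theorem stmt17 (n : ℕ) (hn : 2 ≤ n) :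
    Set.ncard {S : Finset ℕ | IndepSet n S ∧ (phi n)^[2] S = S ∧ phi n S ≠ S}
      = if Odd n then 2 else 0 := by
  have hit : ∀ S : Finset ℕ, (phi n)^[2] S = phi n (phi n S) := fun S => by
    rw [Function.iterate_succ_apply, Function.iterate_one]
  by_cases hodd : Odd n
  · rw [if_pos hodd]
    rw [Nat.odd_iff] at hodd
    have hONE : (∅ : Finset ℕ) ≠ oddSet n := by
      intro h
      have : 1 ∈ oddSet n := mem_oddSet.mpr ⟨le_rfl, by omega, rfl⟩
      rw [← h] at this
      simp at this
    have hset : {S : Finset ℕ | IndepSet n S ∧ (phi n)^[2] S = S ∧ phi n S ≠ S}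
        = {∅, oddSet n} := by
      ext S
      simp only [Set.mem_setOf_eq, Set.mem_insert_iff, Set.mem_singleton_iff]
      constructor
      · rintro ⟨hi, heq, -⟩
        rw [hit] at heq
        exact (hard hn hi heq).2
      · rintro (rfl | rfl)
        · refine ⟨indep_empty n, ?_, ?_⟩
          · rw [hit, phi_empty, phi_oddSet hodd]
          · rw [phi_empty]; exact fun h => hONE h.symm
        · refine ⟨indep_oddSet n, ?_, ?_⟩
          · rw [hit, phi_oddSet hodd, phi_empty]
          · rw [phi_oddSet hodd]; exact hONE
    rw [hset]
    exact Set.ncard_pair hONE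
  · rw [if_neg hodd]
    have hset : {S : Finset ℕ | IndepSet n S ∧ (phi n)^[2] S = S ∧ phi n S ≠ S}
        = (∅ : Set (Finset ℕ)) := by
      ext S
      simp only [Set.mem_setOf_eq, Set.mem_empty_iff_false, iff_false]
      rintro ⟨hi, heq, -⟩
      rw [hit] at heq
      have := (hard hn hi heq).1
      rw [Nat.odd_iff] at hodd
      omega
    rw [hset, Set.ncard_empty]
end
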